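/- For every real r > 0, the identity ∫_r^∞ sinh(r−s)·s^{−2}·e^{−3s} ds = e^{−r}·E(2r) − 2·e^{r}·E(4r) holds; equivalently, r·g(r) equals the integral on the left-hand side. -/

import Mathlib

open Real Set Filter MeasureTheory

/-- `E x = ∫_x^∞ e^{-t}/t dt`, so that `Ei(-x) = -E x` for `x > 0`. -/
noncomputable def expInt (x : ℝ) : ℝ := ∫ t in Set.Ioi x, Real.exp (-t) / t

/-!
Writing `sinh (r - s) e^{-3s} = (e^r e^{-4s} - e^{-r} e^{-2s}) / 2` reduces the integral to
`∫_r^∞ e^{-as} / s² ds` for `a = 2, 4`. Integrating by parts against `d(-1/s)` gives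
`e^{-ar} / r - a ∫_r^∞ e^{-as} / s ds`, and the substitution `t = as` turns the last integral
into `E(ar)`. The boundary terms `e^{-3r} / (2r)` of the two pieces cancel.
-/

section

variable {a r : ℝ}

lemma integrableOn_exp_neg_mul_div_pow (ha : 0 < a) (hr : 0 < r) (n : ℕ) :
    IntegrableOn (fun s => exp (-(a * s)) / s ^ n) (Ioi r) := by
  refine Integrable.mono' ((exp_neg_integrableOn_Ioi r ha).mul_const (r ^ n)⁻¹) ?_ ?_
  · exact (by fun_prop : Measurable fun s : ℝ => exp (-(a * s)) / s ^ n).aestronglyMeasurable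
  · filter_upwards [ae_restrict_mem measurableSet_Ioi] with s (hs : r < s)
    have hs₀ : 0 < s := hr.trans hs
    rw [norm_of_nonneg (by positivity), ← neg_mul, div_eq_mul_inv]
    gcongr

lemma expInt_mul (ha : 0 < a) :
    expInt (a * r) = ∫ s in Ioi r, exp (-(a * s)) / s := by
  have hsubst := integral_comp_mul_left_Ioi (fun t => exp (-t) / t) r ha
  rw [smul_eq_mul, eq_inv_mul_iff_mul_eq₀ ha.ne'] at hsubst
  rw [expInt, ← hsubst, ← integral_const_mul]
  congr 1 with s
  rw [← mul_div_assoc, mul_div_mul_left _ _ ha.ne']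

lemma hasDerivAt_neg_exp_neg_mul_div {s : ℝ} (hs : s ≠ 0) :
    HasDerivAt (fun s => -exp (-(a * s)) / s)
      (a * (exp (-(a * s)) / s) + exp (-(a * s)) / s ^ 2) s := by
  have hexp : HasDerivAt (fun s => -exp (-(a * s))) (a * exp (-(a * s))) s :=
    (((hasDerivAt_id' s).const_mul a).fun_neg.exp).fun_neg.congr_deriv (by ring)
  exact (hexp.fun_div (hasDerivAt_id' s) hs).congr_deriv (by field_simp; ring)

lemma integral_exp_neg_mul_div_sq (ha : 0 < a) (hr : 0 < r) :
    ∫ s in Ioi r, exp (-(a * s)) / s ^ 2 = exp (-(a * r)) / r - a * expInt (a * r) := by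
  have hint₁ : IntegrableOn (fun s => a * (exp (-(a * s)) / s)) (Ioi r) := by
    have h := integrableOn_exp_neg_mul_div_pow ha hr 1
    simp only [pow_one] at h
    exact h.const_mul a
  have hint₂ := integrableOn_exp_neg_mul_div_pow ha hr 2
  have hlim : Tendsto (fun s => -exp (-(a * s)) / s) atTop (nhds 0) := by
    have hexp : Tendsto (fun s => exp (-(a * s))) atTop (nhds 0) :=
      tendsto_exp_atBot.comp (tendsto_neg_atBot_iff.mpr (tendsto_id.const_mul_atTop ha))
    simpa [div_eq_mul_inv] using (hexp.mul tendsto_inv_atTop_zero).neg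
  have hparts : ∫ s in Ioi r, (a * (exp (-(a * s)) / s) + exp (-(a * s)) / s ^ 2) =
      0 - -exp (-(a * r)) / r :=
    integral_Ioi_of_hasDerivAt_of_tendsto (f := fun s => -exp (-(a * s)) / s)
      (by fun_prop (disch := exact hr.ne'))
      (fun s (hs : r < s) => hasDerivAt_neg_exp_neg_mul_div (hr.trans hs).ne')
      (hint₁.add hint₂) hlim
  have hsplit : ∫ s in Ioi r, (a * (exp (-(a * s)) / s) + exp (-(a * s)) / s ^ 2) =
      a * expInt (a * r) + ∫ s in Ioi r, exp (-(a * s)) / s ^ 2 := by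
    rw [integral_add hint₁ hint₂, integral_const_mul, expInt_mul ha]
  linear_combination hparts - hsplit

end

lemma sinh_sub_div_sq_mul_exp (r s : ℝ) :
    sinh (r - s) / s ^ 2 * exp (-3 * s) =
      exp r / 2 * (exp (-(4 * s)) / s ^ 2) - exp (-r) / 2 * (exp (-(2 * s)) / s ^ 2) := by
  have h₄ : exp (r - s) * exp (-3 * s) = exp r * exp (-(4 * s)) := by
    rw [← exp_add, ← exp_add]
    ring_nf
  have h₂ : exp (-(r - s)) * exp (-3 * s) = exp (-r) * exp (-(2 * s)) := by
    rw [← exp_add, ← exp_add]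
    ring_nf
  rw [sinh_eq]
  linear_combination (h₄ - h₂) / (2 * s ^ 2)

/-- For every `r > 0`, `∫_r^∞ sinh(r-s) s^{-2} e^{-3s} ds = e^{-r} E(2r) - 2 e^{r} E(4r)`,
i.e. the left-hand side equals `r g(r)` with `g(r) = r⁻¹(e^{-r} E(2r) - 2 e^{r} E(4r))`. -/
theorem volterra_exp_eq (r : ℝ) (hr : 0 < r) :
    ∫ s in Set.Ioi r, Real.sinh (r - s) / s ^ 2 * Real.exp (-3 * s) =
      Real.exp (-r) * expInt (2 * r) - 2 * Real.exp r * expInt (4 * r) := by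
  simp_rw [sinh_sub_div_sq_mul_exp r]
  rw [integral_sub ((integrableOn_exp_neg_mul_div_pow four_pos hr 2).const_mul _)
      ((integrableOn_exp_neg_mul_div_pow two_pos hr 2).const_mul _),
    integral_const_mul, integral_const_mul, integral_exp_neg_mul_div_sq four_pos hr,
    integral_exp_neg_mul_div_sq two_pos hr]
  have hboundary : exp r * exp (-(4 * r)) = exp (-r) * exp (-(2 * r)) := by
    rw [← exp_add, ← exp_add]
    ring_nf
  linear_combination hboundary / (2 * r)
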